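/- arXiv:2108.00839 — 6 statements merged into one kernel-verified Lean document; each statement's English description precedes it below -/
import Mathlib

section
/- If z and w are conjugate nonreal elements of the real quaternions ℍ, then there exists δ ∈ ℍ with δ ≠ 0, Tr(δ) = 0, and w = δ·z·δ⁻¹. -/
/-!
Conjugating by `q` and by `q * c` agree whenever `c` commutes with `z`. The nonzero elements
`r + s • u`, `u = im z`, all commute with `z`, and `re (q * (r + s • u)) = r re q + s re (q u)` is
linear in `(r, s)`, so `r = re (q u)`, `s = -re q` makes `q * c` traceless. This choice of `c` is
nonzero when `re q ≠ 0`; otherwise `q` itself is already traceless.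
-/

open Quaternion

theorem Commute.conj_mul_eq_conj {G₀ : Type*} [GroupWithZero G₀] {c z : G₀}
    (hcz : Commute c z) (hc : c ≠ 0) (q : G₀) : q * c * z * (q * c)⁻¹ = q * z * q⁻¹ := by
  rw [mul_inv_rev, mul_assoc q c z, hcz.eq, ← mul_assoc q z c, ← mul_assoc,
    mul_inv_cancel_right₀ hc]

namespace Quaternion

section CommRing

variable {R : Type*} [CommRing R]

theorem self_add_star_eq_zero_of_re_eq_zero {a : ℍ[R]} (ha : a.re = 0) : a + star a = 0 := by
  rw [self_add_star', ha, mul_zero, coe_zero]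

theorem commute_coe_add_smul_im (r s : R) (z : ℍ[R]) : Commute (↑r + s • z.im) z := by
  have him : Commute z.im z := by
    conv_rhs => rw [← re_add_im z]
    exact (coe_commute _ _).symm.add_right (Commute.refl _)
  exact (coe_commute r z).add_left (him.smul_left s)

theorem re_mul_coe_add_smul (q u : ℍ[R]) (r s : R) :
    (q * (↑r + s • u)).re = r * q.re + s * (q * u).re := by
  rw [mul_add, mul_coe_eq_smul, mul_smul_comm, re_add, re_smul, re_smul, smul_eq_mul,
    smul_eq_mul]

end CommRing

theorem exists_commute_re_mul_eq_zero {R : Type*} [Field R] {z : ℍ[R]} (hz : z.im ≠ 0)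
    (q : ℍ[R]) : ∃ c : ℍ[R], c ≠ 0 ∧ Commute c z ∧ (q * c).re = 0 := by
  by_cases hq : q.re = 0
  · exact ⟨1, one_ne_zero, Commute.one_left z, by rwa [mul_one]⟩
  refine ⟨↑(q * z.im).re + (-q.re) • z.im, ?_,
    commute_coe_add_smul_im (q * z.im).re (-q.re) z, ?_⟩
  · intro h0
    have him := congrArg Quaternion.im h0
    rw [im_add, im_coe, zero_add, im_smul, im_idem, im_zero] at him
    exact smul_ne_zero (neg_ne_zero.mpr hq) hz him
  · rw [re_mul_coe_add_smul]
    ring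

end Quaternion

theorem conjugate_by_traceless_general (z w : ℍ[ℝ]) (hz : z.im ≠ 0)
    (h : ∃ q : ℍ[ℝ], q ≠ 0 ∧ w = q * z * q⁻¹) :
    ∃ δ : ℍ[ℝ], δ ≠ 0 ∧ δ + star δ = 0 ∧ w = δ * z * δ⁻¹ := by
  obtain ⟨q, hq, rfl⟩ := h
  obtain ⟨c, hc, hcz, hre⟩ := exists_commute_re_mul_eq_zero hz q
  exact ⟨q * c, mul_ne_zero hq hc, self_add_star_eq_zero_of_re_eq_zero hre,
    (hcz.conj_mul_eq_conj hc q).symm⟩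

theorem conjugate_by_traceless (z w : ℍ[ℝ]) (hz : z.im ≠ 0) (hw : w.im ≠ 0)
    (h : ∃ q : ℍ[ℝ], q ≠ 0 ∧ w = q * z * q⁻¹) :
    ∃ δ : ℍ[ℝ], δ ≠ 0 ∧ δ + star δ = 0 ∧ w = δ * z * δ⁻¹ :=
  conjugate_by_traceless_general z w hz h
end

section
/- For α, B ∈ ℍ and ᾶ any conjugate of α (i.e., ᾶ = qαq⁻¹ for some nonzero q), the absolute value |α + B + ᾶ| satisfies m ≤ |α + B + ᾶ| ≤ M, where M = √(Re(2α+B)² + (|Im(α+B)| + |Im(α)|)²) and m = √(Re(2α+B)² + (|Im(α+B)| − |Im(α)|)²). -/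
/-!
Writing `‖z‖² = (Re z)² + ‖Im z‖²`, the real part of `α + B + qαq⁻¹` is `Re(2α + B)` because
conjugation preserves real parts, and its imaginary part is `Im(α + B) + Im(qαq⁻¹)`, where
`‖Im(qαq⁻¹)‖ = ‖Im α‖` because conjugation also preserves the norm. The bounds are then the
triangle inequality and its reverse for the imaginary parts.
-/

open Quaternion

namespace Quaternion

theorem re_mul_comm {R : Type*} [CommRing R] (a b : ℍ[R]) : (a * b).re = (b * a).re := by
  rw [re_mul, re_mul]
  ring

theorem re_mul_mul_inv {R : Type*} [Field R] [LinearOrder R] [IsStrictOrderedRing R]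
    (a : ℍ[R]) {q : ℍ[R]} (hq : q ≠ 0) : (q * a * q⁻¹).re = a.re := by
  rw [re_mul_comm, ← mul_assoc, inv_mul_cancel₀ hq, one_mul]

theorem norm_mul_mul_inv (a : ℍ[ℝ]) {q : ℍ[ℝ]} (hq : q ≠ 0) : ‖q * a * q⁻¹‖ = ‖a‖ := by
  rw [norm_mul, norm_mul, norm_inv, mul_right_comm, mul_inv_cancel₀ (norm_ne_zero_iff.mpr hq),
    one_mul]

theorem sq_norm_eq_re_sq_add_sq_norm_im (a : ℍ[ℝ]) : ‖a‖ ^ 2 = a.re ^ 2 + ‖a.im‖ ^ 2 := by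
  simp only [sq, ← normSq_eq_norm_mul_self, normSq_def', re_im, imI_im, imJ_im, imK_im]
  ring

theorem norm_eq_sqrt_re_sq_add_sq_norm_im (a : ℍ[ℝ]) :
    ‖a‖ = √(a.re ^ 2 + ‖a.im‖ ^ 2) := by
  rw [← sq_norm_eq_re_sq_add_sq_norm_im, Real.sqrt_sq (norm_nonneg a)]

theorem norm_im_mul_mul_inv (a : ℍ[ℝ]) {q : ℍ[ℝ]} (hq : q ≠ 0) :
    ‖(q * a * q⁻¹).im‖ = ‖a.im‖ := by
  have h := sq_norm_eq_re_sq_add_sq_norm_im (q * a * q⁻¹)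
  rw [norm_mul_mul_inv a hq, re_mul_mul_inv a hq, sq_norm_eq_re_sq_add_sq_norm_im] at h
  exact (pow_left_inj₀ (norm_nonneg _) (norm_nonneg _) two_ne_zero).mp (by linarith)

theorem sqrt_re_sq_add_sq_norm_im_sub_le_norm_add (a b : ℍ[ℝ]) :
    √((a + b).re ^ 2 + (‖a.im‖ - ‖b.im‖) ^ 2) ≤ ‖a + b‖ := by
  have h := abs_norm_sub_norm_le a.im (-b.im)
  rw [norm_neg, sub_neg_eq_add] at h
  rw [norm_eq_sqrt_re_sq_add_sq_norm_im (a + b), im_add, ← sq_abs (‖a.im‖ - ‖b.im‖)]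
  gcongr

theorem norm_add_le_sqrt_re_sq_add_sq_norm_im_add (a b : ℍ[ℝ]) :
    ‖a + b‖ ≤ √((a + b).re ^ 2 + (‖a.im‖ + ‖b.im‖) ^ 2) := by
  rw [norm_eq_sqrt_re_sq_add_sq_norm_im (a + b), im_add]
  gcongr
  exact norm_add_le a.im b.im

end Quaternion

theorem conjugate_sum_norm_bounds (α B q : ℍ[ℝ]) (hq : q ≠ 0) :
    Real.sqrt (((2 * α + B).re) ^ 2 + (‖(α + B).im‖ - ‖α.im‖) ^ 2)
        ≤ ‖α + B + q * α * q⁻¹‖ ∧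
      ‖α + B + q * α * q⁻¹‖
        ≤ Real.sqrt (((2 * α + B).re) ^ 2 + (‖(α + B).im‖ + ‖α.im‖) ^ 2) := by
  have hre : (α + B + q * α * q⁻¹).re = (2 * α + B).re := by
    simp only [re_add, re_mul_mul_inv α hq, two_mul]
    ring
  rw [← hre, ← norm_im_mul_mul_inv α hq]
  exact ⟨sqrt_re_sq_add_sq_norm_im_sub_le_norm_add _ _,
    norm_add_le_sqrt_re_sq_add_sq_norm_im_add _ _⟩
end

section
/- Consider f(x) = x² + ix − ½i − ¼ over ℍ, which has fixed point α = −½i. For every λ of the form λ = −½i + r + γ with r ∈ ℂ ⊆ ℍ and γ a nonzero element of ℂj, the component of f(λ) − α lying in ℂj equals (2·Re(r) + i)·γ, and its absolute value is at least |γ|. In particular, the iterates f^{*n}(λ) do not converge to α. -/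
/-!
Write `x = z + w j` with `z, w ∈ ℂ`. Since `j z = z̄ j`, the `ℂj`-part of `x² + i x` is
`(z + z̄ + i) w j = (2 Re z + i) w j`, while `α` and the constant term lie in `ℂ`. Hence the
`ℂj`-part of `f(x) - α` is the `ℂj`-part of `x` multiplied by `2 Re x + i`, which has norm at
least `1`. Along the orbit the `ℂj`-part therefore never shrinks, and as it bounds `‖x - α‖`
from below, a point with nonzero `ℂj`-part cannot be attracted to `α`.
-/

open Quaternion

/-- The quaternion unit `i`. -/
noncomputable def qi : ℍ[ℝ] := ⟨0, 1, 0, 0⟩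

/-- The fixed point `α = -i/2`. -/
noncomputable def qα : ℍ[ℝ] := ⟨0, -1/2, 0, 0⟩

/-- The constant term `-i/2 - 1/4`. -/
noncomputable def qC : ℍ[ℝ] := ⟨-1/4, -1/2, 0, 0⟩

/-- The polynomial map `f(x) = x² + ix - i/2 - 1/4`. -/
noncomputable def qf (x : ℍ[ℝ]) : ℍ[ℝ] := x ^ 2 + qi * x + qC

/-- The multiplier `2·Re(r) + i` as a quaternion. -/
noncomputable def qmult (r : ℍ[ℝ]) : ℍ[ℝ] := ⟨2 * r.re, 1, 0, 0⟩

/-- The projection of a quaternion onto the `ℂj` component. -/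
noncomputable def projCj (z : ℍ[ℝ]) : ℍ[ℝ] := ⟨0, 0, z.imJ, z.imK⟩

attribute [simps] qi qα qC qmult projCj

theorem Quaternion.sq_norm_eq (q : ℍ[ℝ]) :
    ‖q‖ ^ 2 = q.re ^ 2 + q.imI ^ 2 + q.imJ ^ 2 + q.imK ^ 2 := by
  rw [sq, ← normSq_eq_norm_mul_self, normSq_def']

theorem norm_projCj_le (x : ℍ[ℝ]) : ‖projCj x‖ ≤ ‖x‖ := by
  refine (sq_le_sq₀ (norm_nonneg _) (norm_nonneg _)).1 ?_
  simp only [sq_norm_eq, re_projCj, imI_projCj, imJ_projCj, imK_projCj]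
  nlinarith [sq_nonneg x.re, sq_nonneg x.imI]

theorem one_le_norm_qmult (x : ℍ[ℝ]) : 1 ≤ ‖qmult x‖ := by
  refine (sq_le_sq₀ zero_le_one (norm_nonneg _)).1 ?_
  simp only [sq_norm_eq, re_qmult, imI_qmult, imJ_qmult, imK_qmult]
  nlinarith [sq_nonneg (2 * x.re)]

theorem projCj_sub_qα (x : ℍ[ℝ]) : projCj (x - qα) = projCj x := by
  ext <;> simp

theorem projCj_qf_sub_qα (x : ℍ[ℝ]) : projCj (qf x - qα) = qmult x * projCj x := by
  ext <;> simp [qf, sq] <;> ring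

theorem norm_projCj_le_norm_projCj_qf (x : ℍ[ℝ]) : ‖projCj x‖ ≤ ‖projCj (qf x)‖ := by
  rw [← projCj_sub_qα (qf x), projCj_qf_sub_qα, norm_mul]
  exact le_mul_of_one_le_left (norm_nonneg _) (one_le_norm_qmult x)

theorem norm_projCj_le_norm_projCj_iterate_qf (x : ℍ[ℝ]) (n : ℕ) :
    ‖projCj x‖ ≤ ‖projCj (qf^[n] x)‖ := by
  have hmono : Monotone fun n => ‖projCj (qf^[n] x)‖ := monotone_nat_of_le_succ fun n => by
    simpa only [Function.iterate_succ_apply'] using norm_projCj_le_norm_projCj_qf (qf^[n] x)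
  exact hmono n.zero_le

theorem not_tendsto_iterate_qf_qα {x : ℍ[ℝ]} (hx : projCj x ≠ 0) :
    ¬ Filter.Tendsto (fun n : ℕ => qf^[n] x) Filter.atTop (nhds qα) := by
  intro h
  have hdist : ∀ n, ‖projCj x‖ ≤ ‖qf^[n] x - qα‖ := fun n => calc
    ‖projCj x‖ ≤ ‖projCj (qf^[n] x)‖ := norm_projCj_le_norm_projCj_iterate_qf x n
    _ = ‖projCj (qf^[n] x - qα)‖ := by rw [projCj_sub_qα]
    _ ≤ ‖qf^[n] x - qα‖ := norm_projCj_le _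
  have hzero : ‖projCj x‖ ≤ 0 :=
    le_of_tendsto_of_tendsto' tendsto_const_nhds (tendsto_iff_norm_sub_tendsto_zero.1 h) hdist
  exact hx (norm_le_zero_iff.1 hzero)

theorem example_non_attracting (r γ lam : ℍ[ℝ])
    (hr : r.imJ = 0 ∧ r.imK = 0)
    (hγ : γ.re = 0 ∧ γ.imI = 0) (hγ0 : γ ≠ 0)
    (hlam : lam = qα + r + γ) :
    projCj (qf lam - qα) = qmult r * γ ∧
    ‖γ‖ ≤ ‖projCj (qf lam - qα)‖ ∧
    ¬ Filter.Tendsto (fun n : ℕ => qf^[n] lam) Filter.atTop (nhds qα) := by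
  have hproj : projCj lam = γ := by
    ext <;> simp [hlam, hr, hγ]
  have hmult : qmult lam = qmult r := by
    ext <;> simp [hlam, hγ]
  refine ⟨by rw [projCj_qf_sub_qα, hproj, hmult], ?_, ?_⟩
  · simpa only [projCj_sub_qα, hproj] using norm_projCj_le_norm_projCj_qf lam
  · exact not_tendsto_iterate_qf_qα (hproj ▸ hγ0)
end

section
/- For f(x) = x² + Bx + C over ℍ and any λ, α ∈ ℍ with λ ≠ α, setting β = λ − α and ᾶ = βαβ⁻¹, one has |f(λ) − f(α)| ≤ |β|·(√(Re(2α+B)² + (|Im(α+B)| + |Im(α)|)²) + |β|). -/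
open Quaternion

lemma pyth (a : ℝ) (β u v : ℍ[ℝ]) (hu : u.re = 0) (hv : v.re = 0) :
    ‖(a : ℍ[ℝ]) * β + (v * β + β * u)‖ ^ 2
      = a ^ 2 * ‖β‖ ^ 2 + ‖v * β + β * u‖ ^ 2 := by
  have h1 : ∀ z : ℍ[ℝ], ‖z‖ ^ 2 = normSq z := fun z => by
    rw [sq, ← normSq_eq_norm_mul_self]
  simp only [h1]
  simp only [Quaternion.normSq_def', Quaternion.re_add, Quaternion.imI_add,
    Quaternion.imJ_add, Quaternion.imK_add, Quaternion.re_mul, Quaternion.imI_mul,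
    Quaternion.imJ_mul, Quaternion.imK_mul, Quaternion.re_coe, Quaternion.imI_coe,
    Quaternion.imJ_coe, Quaternion.imK_coe, hu, hv]
  ring

theorem quadratic_difference_bound (B C lam α : ℍ[ℝ]) (h : lam ≠ α) :
    ‖(lam ^ 2 + B * lam + C) - (α ^ 2 + B * α + C)‖
      ≤ ‖lam - α‖ *
        (Real.sqrt (((2 * α + B).re) ^ 2 + (‖(α + B).im‖ + ‖α.im‖) ^ 2) + ‖lam - α‖) := by
  set β := lam - α with hβ
  set a : ℝ := (2 * α + B).re with ha
  set u := α.im with hu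
  set v := (α + B).im with hv
  -- decomposition of the difference
  have key : (lam ^ 2 + B * lam + C) - (α ^ 2 + B * α + C)
      = ((a : ℍ[ℝ]) * β + (v * β + β * u)) + β ^ 2 := by
    have hlam : lam = β + α := by rw [hβ, sub_add_cancel]
    have hα : (↑α.re : ℍ[ℝ]) + α.im = α := re_add_im α
    have hαB : (↑(α + B).re : ℍ[ℝ]) + (α + B).im = α + B := re_add_im (α + B)
    have hare : a = α.re + (α + B).re := by
      simp [ha, Quaternion.re_add, two_mul]; ring
    have hcoe : (a : ℍ[ℝ]) = (↑α.re : ℍ[ℝ]) + ↑(α + B).re := by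
      rw [hare]; push_cast; ring
    have hcomm : β * (↑α.re : ℍ[ℝ]) = (↑α.re : ℍ[ℝ]) * β :=
      (Quaternion.coe_commutes _ _).symm
    calc (lam ^ 2 + B * lam + C) - (α ^ 2 + B * α + C)
        = (α + B) * β + β * α + β ^ 2 := by rw [hlam]; noncomm_ring
      _ = ((↑(α + B).re : ℍ[ℝ]) + v) * β + β * ((↑α.re : ℍ[ℝ]) + u) + β ^ 2 := by
          rw [hu, hv, hα, hαB]
      _ = ((a : ℍ[ℝ]) * β + (v * β + β * u)) + β ^ 2 := by
          rw [hcoe]; rw [mul_add β, hcomm]; noncomm_ring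
  rw [key]
  have hure : u.re = 0 := by simp [hu]
  have hvre : v.re = 0 := by simp [hv]
  have step1 : ‖((a : ℍ[ℝ]) * β + (v * β + β * u)) + β ^ 2‖
      ≤ ‖(a : ℍ[ℝ]) * β + (v * β + β * u)‖ + ‖β‖ ^ 2 := by
    calc _ ≤ ‖(a : ℍ[ℝ]) * β + (v * β + β * u)‖ + ‖β ^ 2‖ := norm_add_le _ _
      _ = _ := by rw [norm_pow]
  have hy : ‖v * β + β * u‖ ≤ (‖v‖ + ‖u‖) * ‖β‖ := by
    calc ‖v * β + β * u‖ ≤ ‖v * β‖ + ‖β * u‖ := norm_add_le _ _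
      _ = (‖v‖ + ‖u‖) * ‖β‖ := by rw [norm_mul, norm_mul]; ring
  have step2 : ‖(a : ℍ[ℝ]) * β + (v * β + β * u)‖
      ≤ Real.sqrt (a ^ 2 + (‖v‖ + ‖u‖) ^ 2) * ‖β‖ := by
    have hsq : ‖(a : ℍ[ℝ]) * β + (v * β + β * u)‖ ^ 2
        ≤ (a ^ 2 + (‖v‖ + ‖u‖) ^ 2) * ‖β‖ ^ 2 := by
      rw [pyth a β u v hure hvre]
      have : ‖v * β + β * u‖ ^ 2 ≤ ((‖v‖ + ‖u‖) * ‖β‖) ^ 2 := by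
        apply pow_le_pow_left₀ (norm_nonneg _) hy
      nlinarith [this]
    have h1 : ‖(a : ℍ[ℝ]) * β + (v * β + β * u)‖
        = Real.sqrt (‖(a : ℍ[ℝ]) * β + (v * β + β * u)‖ ^ 2) := by
      rw [Real.sqrt_sq (norm_nonneg _)]
    rw [h1]
    calc Real.sqrt (‖(a : ℍ[ℝ]) * β + (v * β + β * u)‖ ^ 2)
        ≤ Real.sqrt ((a ^ 2 + (‖v‖ + ‖u‖) ^ 2) * ‖β‖ ^ 2) := Real.sqrt_le_sqrt hsq
      _ = Real.sqrt (a ^ 2 + (‖v‖ + ‖u‖) ^ 2) * ‖β‖ := by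
          rw [Real.sqrt_mul (by positivity), Real.sqrt_sq (norm_nonneg _)]
  calc ‖((a : ℍ[ℝ]) * β + (v * β + β * u)) + β ^ 2‖
      ≤ Real.sqrt (a ^ 2 + (‖v‖ + ‖u‖) ^ 2) * ‖β‖ + ‖β‖ ^ 2 :=
        le_trans step1 (by linarith [step2])
    _ = ‖β‖ * (Real.sqrt (a ^ 2 + (‖v‖ + ‖u‖) ^ 2) + ‖β‖) := by ring
end

section
/- In a Cayley doubling A = Q ⊕ Qℓ of a quaternion algebra Q with ℓ² = γ ∈ F^×, for c = a + bℓ with a, b ∈ Q and c invertible, and for E, G ∈ Q with E invertible: −(E⁻¹c⁻¹)(cG) = (−1/Norm(c))·(Norm(a)·E⁻¹G − γ·Norm(b)·GE⁻¹ + (b·(conj(G)·E⁻¹ − E⁻¹·conj(G))·conj(a))·ℓ). -/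
/-!
The Cayley product is `F`-bilinear, so the scalar `Norm(c)⁻¹` of `c⁻¹ = Norm(c)⁻¹ (conj a − bℓ)`
pulls out. Since `E⁻¹` and `G` lie in `Q`, the remaining products are quaternion products, and
`conj(a) a = Norm(a)`, `conj(b) b = Norm(b)` turn the `Q`-component into the stated one; the
`ℓ`-component is a plain ring identity.
-/

open Quaternion

/-- The norm form of a quaternion algebra `ℍ[F, c₁, c₂]` (with `i² = c₁`, `j² = c₂`). -/
def qnorm {F : Type*} [Field F] {c₁ c₂ : F} (z : ℍ[F, c₁, c₂]) : F :=
  z.re ^ 2 - c₁ * z.imI ^ 2 - c₂ * z.imJ ^ 2 + c₁ * c₂ * z.imK ^ 2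

/-- The multiplication of the Cayley doubling `A = Q ⊕ Qℓ` with `ℓ² = γ`:
`(q + rℓ)(s + tℓ) = qs + γ·conj(t)·r + (tq + r·conj(s))ℓ`. -/
def omul {F : Type*} [Field F] {c₁ c₂ : F} (γ : F)
    (x y : ℍ[F, c₁, c₂] × ℍ[F, c₁, c₂]) : ℍ[F, c₁, c₂] × ℍ[F, c₁, c₂] :=
  (x.1 * y.1 + γ • (star y.2 * x.2), y.2 * x.1 + x.2 * star y.1)

section

variable {F : Type*} [Field F] {c₁ c₂ : F}

theorem star_mul_self_eq_qnorm (z : ℍ[F, c₁, c₂]) :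
    star z * z = ((qnorm z : F) : ℍ[F, c₁, c₂]) := by
  rw [QuaternionAlgebra.star_mul_eq_coe]
  congr 1
  simp only [qnorm, QuaternionAlgebra.re_mul, QuaternionAlgebra.re_star,
    QuaternionAlgebra.imI_star, QuaternionAlgebra.imJ_star, QuaternionAlgebra.imK_star]
  ring

theorem mul_star_mul_mul_eq_qnorm_smul (x z y : ℍ[F, c₁, c₂]) :
    x * star z * (z * y) = qnorm z • (x * y) := by
  rw [mul_assoc, ← mul_assoc (star z), star_mul_self_eq_qnorm,
    QuaternionAlgebra.coe_mul_eq_smul, mul_smul_comm]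

variable (γ : F)

theorem omul_mk_zero_left (x y z : ℍ[F, c₁, c₂]) : omul γ (x, 0) (y, z) = (x * y, z * x) := by
  simp [omul]

theorem omul_mk_zero_right (x y z : ℍ[F, c₁, c₂]) :
    omul γ (x, y) (z, 0) = (x * z, y * star z) := by
  simp [omul]

theorem omul_smul_left (r : F) (p q : ℍ[F, c₁, c₂] × ℍ[F, c₁, c₂]) :
    omul γ (r • p) q = r • omul γ p q := by
  simp [omul, smul_comm γ r]

theorem omul_smul_right (r : F) (p q : ℍ[F, c₁, c₂] × ℍ[F, c₁, c₂]) :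
    omul γ p (r • q) = r • omul γ p q := by
  simp [omul, smul_comm γ r]

end

theorem cayley_doubling_root_formula_general {F : Type*} [Field F] (c₁ c₂ γ : F)
    (a b E G : ℍ[F, c₁, c₂]) :
    -(omul γ (omul γ (((qnorm E)⁻¹ • star E : ℍ[F, c₁, c₂]), 0)
        ((qnorm a - γ * qnorm b)⁻¹ • ((star a : ℍ[F, c₁, c₂]), -b)))
      (omul γ (a, b) (G, 0)))
    = (-(qnorm a - γ * qnorm b)⁻¹) •
        (((qnorm a) • (((qnorm E)⁻¹ • star E) * G)
            - (γ * qnorm b) • (G * ((qnorm E)⁻¹ • star E)) : ℍ[F, c₁, c₂]),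
          (b * (star G * ((qnorm E)⁻¹ • star E) - ((qnorm E)⁻¹ • star E) * star G) * star a
            : ℍ[F, c₁, c₂])) := by
  rw [omul_smul_right, omul_mk_zero_left, omul_smul_left, omul_mk_zero_right, ← neg_smul]
  congr 1
  refine Prod.ext ?_ ?_ <;> simp only [omul, star_mul, star_star, mul_neg, neg_mul]
  · rw [mul_star_mul_mul_eq_qnorm_smul, mul_star_mul_mul_eq_qnorm_smul]
    module
  · noncomm_ring

theorem cayley_doubling_root_formula {F : Type*} [Field F] (c₁ c₂ γ : F) (hγ : γ ≠ 0)
    (a b E G : ℍ[F, c₁, c₂])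
    (hc : qnorm a - γ * qnorm b ≠ 0) (hE : qnorm E ≠ 0) :
    -(omul γ (omul γ (((qnorm E)⁻¹ • star E : ℍ[F, c₁, c₂]), 0)
        ((qnorm a - γ * qnorm b)⁻¹ • ((star a : ℍ[F, c₁, c₂]), -b)))
      (omul γ (a, b) (G, 0)))
    = (-(qnorm a - γ * qnorm b)⁻¹) •
        (((qnorm a) • (((qnorm E)⁻¹ • star E) * G)
            - (γ * qnorm b) • (G * ((qnorm E)⁻¹ • star E)) : ℍ[F, c₁, c₂]),
          (b * (star G * ((qnorm E)⁻¹ • star E) - ((qnorm E)⁻¹ • star E) * star G) * star a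
            : ℍ[F, c₁, c₂])) :=
  cayley_doubling_root_formula_general c₁ c₂ γ a b E G
end

section
/- Let f ∈ ℍ[x] and λ ∈ ℍ a root of f (i.e., left-evaluation f(λ) = 0). Then every conjugate μ = qλq⁻¹ of λ is a root of some right scalar multiple f(x)·c of f: specifically, if λ is nonreal and μ = δλδ⁻¹ with Tr(δ) = 0, then μ is a root of f(x)·δ⁻¹. -/
open Polynomial Quaternion

theorem conjugate_root_of_right_multiple (f : ℍ[ℝ][X]) (lam δ : ℍ[ℝ])
    (hroot : f.eval lam = 0) (hlam : lam.im ≠ 0)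
    (hδ : δ ≠ 0) (htr : δ + star δ = 0) :
    (f * C δ⁻¹).eval (δ * lam * δ⁻¹) = 0 := by
  have hpow : ∀ i : ℕ, (δ * lam * δ⁻¹) ^ i = δ * lam ^ i * δ⁻¹ := by
    intro i
    induction i with
    | zero => simp [mul_inv_cancel₀ hδ]
    | succ n ih =>
      rw [pow_succ, ih, pow_succ]
      simp [mul_assoc, inv_mul_cancel_left₀ hδ]
  have h1 : (f * C δ⁻¹).natDegree < f.natDegree + 1 :=
    Nat.lt_succ_of_le (natDegree_mul_le.trans (by simp))
  rw [eval_eq_sum_range' h1]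
  have : ∀ i ∈ Finset.range (f.natDegree + 1),
      (f * C δ⁻¹).coeff i * (δ * lam * δ⁻¹) ^ i = f.coeff i * lam ^ i * δ⁻¹ := by
    intro i _
    rw [coeff_mul_C, hpow]
    simp [mul_assoc, inv_mul_cancel_left₀ hδ]
  rw [Finset.sum_congr rfl this, ← Finset.sum_mul,
    ← eval_eq_sum_range' (Nat.lt_succ_self _), hroot, zero_mul]
end
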